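/- arXiv:2506.21418 — 2 statements merged into one kernel-verified Lean document; each statement's English description precedes it below -/
import Mathlib

section
/- Consequently, a finite graph G = (V, E) has a vertex cover of size at most k if and only if there exists a set S ⊆ V with |S| ≤ k such that for every assignment of distinct capacities to the edges, every edge of G is revealed by S. -/
/-- Edge `e` is revealed by the vantage set `S`: some `s ∈ S` has a (shortest) path on which
`e` appears with capacity strictly smaller than all earlier edges on the path. -/
def Revealed {V : Type*} (G : SimpleGraph V) (c : Sym2 V → ℝ) (S : Set V)
    (e : Sym2 V) : Prop :=
  ∃ s ∈ S, ∃ t : V, ∃ p : G.Walk s t, p.IsPath ∧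
    ∃ i : Fin p.edges.length, p.edges.get i = e ∧
      ∀ j : Fin p.edges.length, j < i → c e < c (p.edges.get j)

lemma revealed_of_adj {V : Type*} (G : SimpleGraph V) (c : Sym2 V → ℝ) (S : Set V)
    {a b : V} (h : G.Adj a b) (ha : a ∈ S) : Revealed G c S s(a, b) := by
  refine ⟨a, ha, b, (SimpleGraph.Path.singleton h).1, (SimpleGraph.Path.singleton h).2,
    ⟨0, by simp [SimpleGraph.Path.singleton]⟩, by simp [SimpleGraph.Path.singleton],
    fun j hj => absurd (Fin.lt_def.mp hj) (Nat.not_lt_zero _)⟩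

/-- `G` has a vertex cover of size at most `k` iff there is a set `S` of at most `k` vantage
points revealing every edge under every assignment of distinct capacities. -/
theorem stmt10 {V : Type*} [Fintype V] [DecidableEq V] (G : SimpleGraph V) (k : ℕ) :
    (∃ C : Finset V, (∀ e ∈ G.edgeSet, ∃ x ∈ C, x ∈ e) ∧ C.card ≤ k) ↔
    (∃ S : Finset V, S.card ≤ k ∧
      ∀ c : Sym2 V → ℝ, Set.InjOn c G.edgeSet →
        ∀ e ∈ G.edgeSet, Revealed G c (↑S) e) := by
  constructor
  · rintro ⟨C, hcov, hcard⟩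
    refine ⟨C, hcard, fun c _ e he => ?_⟩
    obtain ⟨x, hxC, hxe⟩ := hcov e he
    revert he hxe
    induction e using Sym2.ind with
    | _ a b =>
      intro he hxe
      have hadj : G.Adj a b := he
      rw [Sym2.mem_iff] at hxe
      rcases hxe with rfl | rfl
      · exact revealed_of_adj G c _ hadj hxC
      · rw [Sym2.eq_swap]
        exact revealed_of_adj G c _ hadj.symm hxC
  · rintro ⟨S, hcard, hrev⟩
    refine ⟨S, fun e he => ?_, hcard⟩
    set n := Fintype.card (Sym2 V) with hn
    set φ := Fintype.equivFin (Sym2 V) with hφ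
    set c : Sym2 V → ℝ := fun e' => if e' = e then (n : ℝ) + 1 else ((φ e' : ℕ) : ℝ) with hc
    have hlt_n : ∀ e', e' ≠ e → c e' < (n : ℝ) + 1 := by
      intro e' hne
      simp only [hc, if_neg hne]
      exact_mod_cast Nat.lt_succ_of_lt (φ e').isLt
    have hce : c e = (n : ℝ) + 1 := by simp [hc]
    have hinj : Set.InjOn c G.edgeSet := by
      intro a _ b _ hab
      by_cases h1 : a = e <;> by_cases h2 : b = e
      · rw [h1, h2]
      · exfalso; rw [h1, hce] at hab; exact absurd hab.symm (ne_of_lt (hlt_n b h2))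
      · exfalso; rw [h2, hce] at hab; exact absurd hab (ne_of_lt (hlt_n a h1))
      · simp only [hc, if_neg h1, if_neg h2, Nat.cast_inj] at hab
        exact φ.injective (Fin.ext hab)
    obtain ⟨s, hs, t, p, hp, i, hi, hlti⟩ := hrev c hinj e he
    cases p with
    | nil => exact absurd i.isLt (by simp)
    | cons hadj q =>
      rename_i w
      -- edges = s(s, w) :: q.edges
      have hi0 : (i : ℕ) = 0 := by
        by_contra h0
        have hj : (⟨0, by simp⟩ : Fin (SimpleGraph.Walk.cons hadj q).edges.length) < i :=
          Fin.lt_def.mpr (Nat.pos_of_ne_zero h0)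
        have := hlti ⟨0, by simp⟩ hj
        have hget : (SimpleGraph.Walk.cons hadj q).edges.get ⟨0, by simp⟩ = s(s, w) := by
          simp [SimpleGraph.Walk.edges]
        rw [hget, hce] at this
        by_cases hsw : s(s, w) = e
        · rw [hsw, hce] at this; linarith
        · exact absurd this (not_lt_of_gt (hlt_n _ hsw))
      have : (SimpleGraph.Walk.cons hadj q).edges.get i = s(s, w) := by
        have : i = ⟨0, by simp⟩ := Fin.ext hi0
        rw [this]; simp [SimpleGraph.Walk.edges]
      rw [this] at hi
      exact ⟨s, hs, by rw [← hi]; exact Sym2.mem_mk_left s w⟩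
end

section
/- Fix finite sets and the union-coverage model: for each v ∈ V a set A_v ⊆ U, f(X) = |⋃_{v∈X} A_v|. The greedy algorithm that iteratively adds the element with maximum marginal gain for k steps produces a set S_k with f(S_k) ≥ (1 − (1 − 1/k)^k)·max_{|X|=k} f(X) ≥ (1 − 1/e)·max_{|X|=k} f(X). -/
/-!
Write `B` for the elements covered by the current greedy set. Each of the `k` sets of an optimal
`X` adds at most the greedy marginal gain to `B`, so the gap `f X - f (S i)` is at most `k` times
the greedy gain at step `i`, i.e. every greedy step closes at least a `1/k` fraction of the gap.
After `k` steps the gap is at most `(1 - 1/k)^k f X ≤ f X / e`.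
-/

open Finset

namespace Finset

variable {V U : Type*} [DecidableEq U] (A : V → Finset U)

theorem card_biUnion_union_singleton [DecidableEq V] (S : Finset V) (w : V) :
    #((S ∪ {w}).biUnion A) = #(S.biUnion A) + #(A w \ S.biUnion A) := by
  rw [union_comm, ← insert_eq, biUnion_insert, ← card_sdiff_add_card, add_comm]

theorem card_biUnion_le_card_add_sum_card_sdiff (B : Finset U) (X : Finset V) :
    #(X.biUnion A) ≤ #B + ∑ x ∈ X, #(A x \ B) :=
  calc #(X.biUnion A) ≤ #(B ∪ X.biUnion fun x => A x \ B) :=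
        card_le_card fun u => by simp only [mem_biUnion, mem_union, mem_sdiff]; tauto
    _ ≤ #B + #(X.biUnion fun x => A x \ B) := card_union_le _ _
    _ ≤ #B + ∑ x ∈ X, #(A x \ B) := Nat.add_le_add_left card_biUnion_le _

theorem card_biUnion_le_of_forall_card_sdiff_le (B : Finset U) (X : Finset V) (v : V)
    (h : ∀ x ∈ X, #(A x \ B) ≤ #(A v \ B)) :
    #(X.biUnion A) ≤ #B + #X * #(A v \ B) :=
  (card_biUnion_le_card_add_sum_card_sdiff A B X).trans
    (Nat.add_le_add_left (sum_le_card_nsmul X _ _ h) _)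

end Finset

theorem sub_le_one_sub_one_div_pow_mul_sub {a : ℕ → ℝ} {M c : ℝ} (hc : 1 ≤ c) {n : ℕ}
    (h : ∀ i < n, M - a i ≤ c * (a (i + 1) - a i)) :
    M - a n ≤ (1 - 1 / c) ^ n * (M - a 0) := by
  induction n with
  | zero => simp
  | succ n ih =>
    have hc₀ : 0 < c := by linarith
    have hgain : (M - a n) / c ≤ a (n + 1) - a n := by
      rw [div_le_iff₀ hc₀]; linarith [h n n.lt_succ_self]
    have hfactor : 0 ≤ 1 - 1 / c := sub_nonneg.2 ((div_le_one hc₀).2 hc)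
    calc M - a (n + 1) ≤ (1 - 1 / c) * (M - a n) := by
          rw [one_sub_mul, one_div_mul_eq_div]; linarith
      _ ≤ (1 - 1 / c) * ((1 - 1 / c) ^ n * (M - a 0)) :=
          mul_le_mul_of_nonneg_left (ih fun i hi => h i (by omega)) hfactor
      _ = (1 - 1 / c) ^ (n + 1) * (M - a 0) := by ring

theorem one_sub_one_div_pow_le_one_div_exp {k : ℕ} (hk : 0 < k) :
    (1 - 1 / (k : ℝ)) ^ k ≤ 1 / Real.exp 1 := by
  rw [one_div (Real.exp 1), ← Real.exp_neg]
  exact Real.one_sub_div_pow_le_exp_neg (by exact_mod_cast hk)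

theorem stmt18_general {V U : Type*} [DecidableEq V] [DecidableEq U]
    (A : V → Finset U) (k : ℕ) (hk : 0 < k)
    (f : Finset V → ℝ) (hf : ∀ X : Finset V, f X = ((X.biUnion A).card : ℝ))
    (g : ℕ → V) (S : ℕ → Finset V)
    (hS : ∀ i, S i = (Finset.range i).image g)
    (hgreedy : ∀ i < k, ∀ w : V, f (S i ∪ {w}) ≤ f (S i ∪ {g i})) :
    ∀ X : Finset V, X.card = k →
      (1 - (1 - 1 / (k : ℝ)) ^ k) * f X ≤ f (S k) ∧
      (1 - 1 / Real.exp 1) * f X ≤ f (S k) := by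
  intro X hX
  have hS_succ (i : ℕ) : S (i + 1) = S i ∪ {g i} := by
    rw [hS, hS, range_add_one, image_insert, insert_eq, union_comm]
  have hstep : ∀ i < k, f X - f (S i) ≤ k * (f (S (i + 1)) - f (S i)) := by
    intro i hi
    have hgain (w : V) : #(A w \ (S i).biUnion A) ≤ #(A (g i) \ (S i).biUnion A) := by
      have := hgreedy i hi w
      rw [hf, hf, card_biUnion_union_singleton, card_biUnion_union_singleton] at this
      exact Nat.le_of_add_le_add_left (Nat.cast_le.1 this)
    have hcover := card_biUnion_le_of_forall_card_sdiff_le A _ X (g i) fun x _ => hgain x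
    rw [hf, hf, hf, hS_succ, card_biUnion_union_singleton, ← hX]
    rw [← Nat.cast_le (α := ℝ)] at hcover
    push_cast at hcover ⊢
    linarith
  have hgap := sub_le_one_sub_one_div_pow_mul_sub (by exact_mod_cast hk) hstep
  have hf₀ : f (S 0) = 0 := by simp [hf, hS]
  have hfX : 0 ≤ f X := by rw [hf]; positivity
  have hexp := one_sub_one_div_pow_le_one_div_exp hk
  rw [hf₀, sub_zero] at hgap
  constructor <;> nlinarith

/-- Greedy for union coverage: the greedy algorithm adding for `k` steps the element of
maximum marginal gain achieves at least `(1 - (1 - 1/k)^k) ≥ (1 - 1/e)` times the optimum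
over sets of size `k`. -/
theorem stmt18 {V U : Type*} [Fintype V] [Fintype U] [DecidableEq V] [DecidableEq U]
    (A : V → Finset U) (k : ℕ) (hk : 0 < k)
    (f : Finset V → ℝ) (hf : ∀ X : Finset V, f X = ((X.biUnion A).card : ℝ))
    (g : ℕ → V) (S : ℕ → Finset V)
    (hS : ∀ i, S i = (Finset.range i).image g)
    (hgreedy : ∀ i < k, ∀ w : V, f (S i ∪ {w}) ≤ f (S i ∪ {g i})) :
    ∀ X : Finset V, X.card = k →
      (1 - (1 - 1 / (k : ℝ)) ^ k) * f X ≤ f (S k) ∧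
      (1 - 1 / Real.exp 1) * f X ≤ f (S k) :=
  stmt18_general A k hk f hf g S hS hgreedy
end
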